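/- arXiv:1305.3019 — 6 statements merged into one kernel-verified Lean document; each statement's English description precedes it below -/
import Mathlib

section
/- Let q be an odd prime power, let N ≡ 0 (mod 4) with N ≥ 4, set q' = q^{(N−2)/2}, and let F_{q'} be the field extension of F_q of degree (N−2)/2. If A ⊆ F_q² is a bicovering arc of size k, then the set C_A = {(α, α², u, v) : α ∈ F_{q'}, (u,v) ∈ A} ⊆ F_{q'} × F_{q'} × F_q × F_q (an F_q-vector space of dimension N) is a complete cap of size k·q^{(N−2)/2}. -/
/-!
A line of `E × E × F²` through three points of `C_A` either meets the parabola `{(α, α²)}` in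
three points, which is impossible, or has constant `E × E`-coordinates, and then its
`F²`-coordinates are three collinear points of `A`; so `C_A` is a cap.

For completeness, `(x₁, x₂, w)` lies on the line through `(a, a², P₁)` and `(a + e, (a + e)², P₂)`,
`a = x₁ - r e`, as soon as `w - P₁ = r (P₂ - P₁)` and `x₁² - x₂ = r (r - 1) e²`. A bicovering arc
supplies such pairs with `r (r - 1)` a nonzero square and with `r (r - 1)` a nonsquare of `F`
(for `w ∈ A` take `P₁ = P₂ = w`, with the values of `r` found at any point outside `A`). As
`[E : F]` is odd, nonsquares of `F` remain nonsquares in `E`, so one of the two square classes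
matches that of `x₁² - x₂`.
-/

/-- An arc (cap): a set of points of an `F`-vector space, no three of which are collinear. -/
def IsCap (F : Type*) [Field F] {V : Type*} [AddCommGroup V] [Module F V]
    (A : Set V) : Prop :=
  ∀ P₁ ∈ A, ∀ P₂ ∈ A, ∀ P₃ ∈ A, P₁ ≠ P₂ → P₁ ≠ P₃ → P₂ ≠ P₃ →
    ¬ Collinear F ({P₁, P₂, P₃} : Set V)

/-- A complete cap: a cap not contained in a larger cap. -/
def IsCompleteCap (F : Type*) [Field F] {V : Type*} [AddCommGroup V] [Module F V]
    (A : Set V) : Prop :=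
  IsCap F A ∧ ∀ B : Set V, IsCap F B → A ⊆ B → B = A

/-- An arc in the affine plane. -/
def IsArc (F : Type*) [Field F] (A : Set (F × F)) : Prop :=
  ∀ P₁ ∈ A, ∀ P₂ ∈ A, ∀ P₃ ∈ A, P₁ ≠ P₂ → P₁ ≠ P₃ → P₂ ≠ P₃ →
    ¬ Collinear F ({P₁, P₂, P₃} : Set (F × F))

/-- `P` is external to the segment `P₁P₂`: writing `P - P₁ = α • (P₂ - P₁)` and
`P - P₂ = β • (P₂ - P₁)`, the product `α * β` is a nonzero square. -/
def IsExternalSeg (F : Type*) [Field F] (P P₁ P₂ : F × F) : Prop :=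
  ∃ α β : F, P - P₁ = α • (P₂ - P₁) ∧ P - P₂ = β • (P₂ - P₁) ∧
    α * β ≠ 0 ∧ IsSquare (α * β)

/-- `P` is internal to the segment `P₁P₂`. -/
def IsInternalSeg (F : Type*) [Field F] (P P₁ P₂ : F × F) : Prop :=
  ∃ α β : F, P - P₁ = α • (P₂ - P₁) ∧ P - P₂ = β • (P₂ - P₁) ∧
    ¬ IsSquare (α * β)

/-- `P` is bicovered by `A`. -/
def IsBicovered (F : Type*) [Field F] (A : Set (F × F)) (P : F × F) : Prop :=
  (∃ P₁ ∈ A, ∃ P₂ ∈ A, P₁ ≠ P₂ ∧ P ≠ P₁ ∧ P ≠ P₂ ∧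
    Collinear F ({P, P₁, P₂} : Set (F × F)) ∧ IsExternalSeg F P P₁ P₂) ∧
  (∃ P₃ ∈ A, ∃ P₄ ∈ A, P₃ ≠ P₄ ∧ P ≠ P₃ ∧ P ≠ P₄ ∧
    Collinear F ({P, P₃, P₄} : Set (F × F)) ∧ IsInternalSeg F P P₃ P₄)

/-- A bicovering arc: an arc bicovering every point of the plane not in it. -/
def IsBicoveringArc (F : Type*) [Field F] (A : Set (F × F)) : Prop :=
  IsArc F A ∧ ∀ P ∉ A, IsBicovered F A P

section Collinear

variable {F V : Type*} [Field F] [AddCommGroup V] [Module F V]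

theorem collinear_insert_iff_exists_sub_eq_smul {P Q₁ Q₂ : V} (h : Q₁ ≠ Q₂) :
    Collinear F ({P, Q₁, Q₂} : Set V) ↔ ∃ r : F, P - Q₁ = r • (Q₂ - Q₁) := by
  have hline : P ∈ line[F, Q₁, Q₂] ↔ ∃ r : F, r • (Q₂ - Q₁) = P - Q₁ := by
    simpa using vadd_left_mem_affineSpan_pair (k := F) (p₁ := Q₁) (p₂ := Q₂) (v := P - Q₁)
  refine ⟨fun hc => ?_, fun ⟨r, hr⟩ => collinear_insert_of_mem_affineSpan_pair
    (hline.2 ⟨r, hr.symm⟩)⟩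
  obtain ⟨r, hr⟩ := hline.1 (hc.mem_affineSpan_of_mem_of_ne (by simp) (by simp) (by simp) h)
  exact ⟨r, hr.symm⟩

theorem eq_sub_one_of_sub_eq_smul {P P₁ P₂ : V} {α β : F} (h : P₁ ≠ P₂)
    (hα : P - P₁ = α • (P₂ - P₁)) (hβ : P - P₂ = β • (P₂ - P₁)) : β = α - 1 := by
  have h0 : (α - 1 - β) • (P₂ - P₁) = 0 := by
    rw [sub_smul, sub_smul, one_smul, ← hα, ← hβ]
    abel
  rcases smul_eq_zero.1 h0 with h' | h'
  · linear_combination -h'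
  · exact absurd (sub_eq_zero.1 h').symm h

theorem IsCap.isCompleteCap_of_forall_notMem {S : Set V} (hS : IsCap F S)
    (hcover : ∀ x ∉ S, ∃ Q₁ ∈ S, ∃ Q₂ ∈ S, Q₁ ≠ Q₂ ∧ Collinear F ({x, Q₁, Q₂} : Set V)) :
    IsCompleteCap F S := by
  refine ⟨hS, fun B hB hSB => (Set.Subset.antisymm (fun x hxB => ?_) hSB)⟩
  by_contra hx
  obtain ⟨Q₁, hQ₁, Q₂, hQ₂, hne, hcol⟩ := hcover x hx
  exact hB x hxB Q₁ (hSB hQ₁) Q₂ (hSB hQ₂) (fun h => hx (h ▸ hQ₁)) (fun h => hx (h ▸ hQ₂)) hne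
    hcol

end Collinear

theorem not_isSquare_algebraMap_of_odd_finrank {K L : Type*} [Field K] [Field L] [Algebra K L]
    [FiniteDimensional K L] (hodd : Odd (Module.finrank K L)) {a : K} (ha : ¬IsSquare a) :
    ¬IsSquare (algebraMap K L a) := by
  rintro ⟨b, hb⟩
  have hirr : Irreducible (Polynomial.X ^ 2 - Polynomial.C a) :=
    X_pow_sub_C_irreducible_of_prime Nat.prime_two fun c hc => ha ⟨c, by rw [← hc, sq]⟩
  have hmin : minpoly K b = Polynomial.X ^ 2 - Polynomial.C a := by
    refine (minpoly.eq_of_irreducible_of_monic hirr ?_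
      (Polynomial.monic_X_pow_sub_C a two_ne_zero)).symm
    simp [hb, sq]
  have h2 := minpoly.degree_dvd (IsIntegral.of_finite K b)
  rw [hmin, Polynomial.natDegree_X_pow_sub_C] at h2
  exact Nat.not_even_iff_odd.mpr hodd (even_iff_two_dvd.mpr h2)

theorem isSquare_mul_of_not_isSquare {K : Type*} [Field K] [Fintype K] {a b : K}
    (ha : ¬IsSquare a) (hb : ¬IsSquare b) : IsSquare (a * b) := by
  classical
  have ha0 : a ≠ 0 := by rintro rfl; exact ha IsSquare.zero
  have hb0 : b ≠ 0 := by rintro rfl; exact hb IsSquare.zero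
  rw [← quadraticChar_one_iff_isSquare (mul_ne_zero ha0 hb0), map_mul,
    quadraticChar_neg_one_iff_not_isSquare.mpr ha, quadraticChar_neg_one_iff_not_isSquare.mpr hb]
  rfl

theorem exists_eq_mul_sq_or_eq_mul_sq {K : Type*} [Field K] [Fintype K] {s t : K} (hs0 : s ≠ 0)
    (hs : IsSquare s) (ht : ¬IsSquare t) (d : K) : ∃ e : K, d = s * e ^ 2 ∨ d = t * e ^ 2 := by
  have ht0 : t ≠ 0 := by rintro rfl; exact ht IsSquare.zero
  by_cases hd : IsSquare d
  · obtain ⟨u, rfl⟩ := hs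
    obtain ⟨v, rfl⟩ := hd
    have hu : u ≠ 0 := by rintro rfl; simp at hs0
    exact ⟨v / u, Or.inl (by field_simp)⟩
  · obtain ⟨v, hv⟩ := isSquare_mul_of_not_isSquare hd ht
    refine ⟨v / t, Or.inr ?_⟩
    field_simp
    linear_combination hv

def parabolaProd (E : Type*) {W : Type*} [Monoid E] (A : Set W) : Set (E × E × W) :=
  {x | ∃ α : E, ∃ P ∈ A, x = (α, α ^ 2, P)}

theorem ncard_parabolaProd {E W : Type*} [Monoid E] [Finite E] (A : Set W) :
    (parabolaProd E A).ncard = Nat.card E * A.ncard := by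
  have himage : parabolaProd E A = (fun y : E × W => (y.1, y.1 ^ 2, y.2)) '' (Set.univ ×ˢ A) := by
    ext x
    simp [parabolaProd, eq_comm]
  have hinj : Function.Injective fun y : E × W => (y.1, y.1 ^ 2, y.2) := by
    rintro ⟨a, P⟩ ⟨b, Q⟩ h
    simp_all
  rw [himage, Set.ncard_image_of_injective _ hinj, Set.ncard_prod, Set.ncard_univ]

section ParabolaProd

variable {F E W : Type*} [Field F] [Field E] [Algebra F E] [AddCommGroup W] [Module F W]

theorem isCap_parabolaProd {A : Set W} (hA : IsCap F A) : IsCap F (parabolaProd E A) := by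
  rintro _ ⟨a₁, P₁, h₁, rfl⟩ _ ⟨a₂, P₂, h₂, rfl⟩ _ ⟨a₃, P₃, h₃, rfl⟩ h₁₂ h₁₃ h₂₃ hcol
  obtain ⟨r, hr⟩ := (collinear_insert_iff_exists_sub_eq_smul h₂₃).1 hcol
  simp only [Prod.mk_sub_mk, Prod.smul_mk, Prod.mk.injEq, Algebra.smul_def] at hr
  obtain ⟨ha, ha2, hP⟩ := hr
  have hkey : algebraMap F E r * (algebraMap F E r - 1) * (a₃ - a₂) ^ 2 = 0 := by
    linear_combination ha2 - (a₁ + a₂) * ha - algebraMap F E r * (a₃ - a₂) * ha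
  rcases mul_eq_zero.1 hkey with hr' | hd
  · rcases mul_eq_zero.1 hr' with hr0 | hr1
    · rw [hr0, zero_mul, sub_eq_zero] at ha
      rw [(FaithfulSMul.algebraMap_eq_zero_iff F E).1 hr0, zero_smul, sub_eq_zero] at hP
      exact h₁₂ (by rw [ha, hP])
    · rw [sub_eq_zero, ← map_one (algebraMap F E)] at hr1
      rw [(algebraMap F E).injective hr1, one_smul, sub_left_inj] at hP
      rw [hr1, map_one, one_mul, sub_left_inj] at ha
      exact h₁₃ (by rw [ha, hP])
  · have ha₃ : a₃ = a₂ := sub_eq_zero.1 (pow_eq_zero_iff two_ne_zero |>.1 hd)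
    rw [ha₃, sub_self, mul_zero, sub_eq_zero] at ha
    subst ha ha₃
    refine hA P₁ h₁ P₂ h₂ P₃ h₃ (fun h => h₁₂ (by rw [h])) (fun h => h₁₃ (by rw [h]))
      (fun h => h₂₃ (by rw [h])) ?_
    exact (collinear_insert_iff_exists_sub_eq_smul fun h => h₂₃ (by rw [h])).2 ⟨r, hP⟩

theorem exists_collinear_parabolaProd {A : Set W} {P₁ P₂ w : W} (h₁ : P₁ ∈ A) (h₂ : P₂ ∈ A)
    {r : F} (hw : w - P₁ = r • (P₂ - P₁)) {x₁ x₂ e : E}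
    (hx : x₁ ^ 2 - x₂ = algebraMap F E (r * (r - 1)) * e ^ 2) (hne : P₁ ≠ P₂ ∨ e ≠ 0) :
    ∃ Q₁ ∈ parabolaProd E A, ∃ Q₂ ∈ parabolaProd E A, Q₁ ≠ Q₂ ∧
      Collinear F ({(x₁, x₂, w), Q₁, Q₂} : Set (E × E × W)) := by
  set a := x₁ - algebraMap F E r * e
  have hQ : ((a, a ^ 2, P₁) : E × E × W) ≠ (a + e, (a + e) ^ 2, P₂) := fun h => by
    simp only [Prod.mk.injEq, left_eq_add] at h
    exact hne.elim (· h.2.2) (· h.1)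
  refine ⟨_, ⟨a, P₁, h₁, rfl⟩, _, ⟨a + e, P₂, h₂, rfl⟩, hQ,
    (collinear_insert_iff_exists_sub_eq_smul hQ).2 ⟨r, ?_⟩⟩
  simp only [Prod.mk_sub_mk, Prod.smul_mk, Prod.mk.injEq, Algebra.smul_def, hw, and_true]
  rw [map_mul, map_sub, map_one] at hx
  constructor
  · ring
  · linear_combination -hx

end ParabolaProd

section Plane

variable {F : Type*} [Field F]

theorem IsExternalSeg.exists_isSquare {P P₁ P₂ : F × F} (h : IsExternalSeg F P P₁ P₂)
    (h₁₂ : P₁ ≠ P₂) :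
    ∃ r : F, P - P₁ = r • (P₂ - P₁) ∧ r * (r - 1) ≠ 0 ∧ IsSquare (r * (r - 1)) := by
  obtain ⟨α, β, hα, hβ, h0, hsq⟩ := h
  rw [eq_sub_one_of_sub_eq_smul h₁₂ hα hβ] at h0 hsq
  exact ⟨α, hα, h0, hsq⟩

theorem IsInternalSeg.exists_not_isSquare {P P₁ P₂ : F × F} (h : IsInternalSeg F P P₁ P₂)
    (h₁₂ : P₁ ≠ P₂) : ∃ r : F, P - P₁ = r • (P₂ - P₁) ∧ ¬IsSquare (r * (r - 1)) := by
  obtain ⟨α, β, hα, hβ, hns⟩ := h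
  rw [eq_sub_one_of_sub_eq_smul h₁₂ hα hβ] at hns
  exact ⟨α, hα, hns⟩

theorem not_isArc_univ (hF : ringChar F ≠ 2) : ¬IsArc F Set.univ := by
  have h2 : (2 : F) ≠ 0 := Ring.two_ne_zero hF
  have hne : ((1 : F), (0 : F)) ≠ (-1, 0) := by
    simpa using (Ring.neg_one_ne_one_of_char_ne_two hF).symm
  refine fun h => h (0, 0) trivial (1, 0) trivial (-1, 0) trivial (by simp) (by simp) hne
    ((collinear_insert_iff_exists_sub_eq_smul hne).2 ⟨2⁻¹, ?_⟩)
  ext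
  · simp
    field_simp
    ring
  · simp

theorem IsBicoveringArc.exists_isSquare_not_isSquare {A : Set (F × F)} (hA : IsBicoveringArc F A)
    (hF : ringChar F ≠ 2) : ∃ r₁ r₂ : F, r₁ * (r₁ - 1) ≠ 0 ∧ IsSquare (r₁ * (r₁ - 1)) ∧
      ¬IsSquare (r₂ * (r₂ - 1)) := by
  obtain ⟨P, hP⟩ : ∃ P, P ∉ A := by
    by_contra! hall
    exact not_isArc_univ hF (Set.eq_univ_of_forall hall ▸ hA.1)
  obtain ⟨⟨P₁, -, P₂, -, h₁₂, -, -, -, hext⟩, ⟨P₃, -, P₄, -, h₃₄, -, -, -, hint⟩⟩ := hA.2 P hP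
  obtain ⟨r₁, -, h0, hsq⟩ := hext.exists_isSquare h₁₂
  obtain ⟨r₂, -, hns⟩ := hint.exists_not_isSquare h₃₄
  exact ⟨r₁, r₂, h0, hsq, hns⟩

end Plane

theorem isCompleteCap_parabolaProd {F E : Type*} [Field F] [Field E] [Fintype E] [Algebra F E]
    (hF : ringChar F ≠ 2) (hodd : Odd (Module.finrank F E)) {A : Set (F × F)}
    (hA : IsBicoveringArc F A) : IsCompleteCap F (parabolaProd E A) := by
  refine (isCap_parabolaProd hA.1).isCompleteCap_of_forall_notMem ?_
  rintro ⟨x₁, x₂, w⟩ hx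
  have hsplit : ∀ r₁ r₂ : F, r₁ * (r₁ - 1) ≠ 0 → IsSquare (r₁ * (r₁ - 1)) →
      ¬IsSquare (r₂ * (r₂ - 1)) → ∃ e : E, x₁ ^ 2 - x₂ = algebraMap F E (r₁ * (r₁ - 1)) * e ^ 2 ∨
        x₁ ^ 2 - x₂ = algebraMap F E (r₂ * (r₂ - 1)) * e ^ 2 := fun r₁ r₂ h0 hsq hns =>
    exists_eq_mul_sq_or_eq_mul_sq ((map_ne_zero _).2 h0) (hsq.map _)
      (not_isSquare_algebraMap_of_odd_finrank hodd hns) _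
  by_cases hw : w ∈ A
  · have hx0 : x₁ ^ 2 - x₂ ≠ 0 := fun h => hx ⟨x₁, w, hw, by rw [sub_eq_zero.1 h]⟩
    have hww : ∀ r : F, w - w = r • (w - w) := by simp
    obtain ⟨r₁, r₂, h0, hsq, hns⟩ := hA.exists_isSquare_not_isSquare hF
    obtain ⟨e, he | he⟩ := hsplit r₁ r₂ h0 hsq hns <;>
    · refine exists_collinear_parabolaProd hw hw (hww _) he (Or.inr fun he0 => hx0 ?_)
      rw [he, he0]
      ring
  · obtain ⟨⟨P₁, h₁, P₂, h₂, h₁₂, -, -, -, hext⟩, ⟨P₃, h₃, P₄, h₄, h₃₄, -, -, -, hint⟩⟩ :=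
      hA.2 _ hw
    obtain ⟨r₁, hr₁, h0, hsq⟩ := hext.exists_isSquare h₁₂
    obtain ⟨r₂, hr₂, hns⟩ := hint.exists_not_isSquare h₃₄
    obtain ⟨e, he | he⟩ := hsplit r₁ r₂ h0 hsq hns
    · exact exists_collinear_parabolaProd h₁ h₂ hr₁ he (Or.inl h₁₂)
    · exact exists_collinear_parabolaProd h₃ h₄ hr₂ he (Or.inl h₃₄)

theorem statement_2_general (p h q : ℕ) (hp : p.Prime) (hp2 : p ≠ 2)
    (hq : q = p ^ h)
    (F : Type) [Field F] [Fintype F] (hcard : Fintype.card F = q)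
    (N : ℕ) (hN4 : N % 4 = 0) (hN : 4 ≤ N)
    (E : Type) [Field E] [Fintype E] [Algebra F E]
    (hdeg : Module.finrank F E = (N - 2) / 2)
    (A : Set (F × F)) (k : ℕ) (hA : IsBicoveringArc F A) (hk : A.ncard = k) :
    IsCompleteCap F {x : E × E × F × F | ∃ α : E, ∃ P ∈ A, x = (α, α ^ 2, P.1, P.2)} ∧
    Set.ncard {x : E × E × F × F | ∃ α : E, ∃ P ∈ A, x = (α, α ^ 2, P.1, P.2)}
      = k * q ^ ((N - 2) / 2) := by
  have hq_odd : Odd q := hq ▸ (hp.odd_of_ne_two hp2).pow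
  have hF : ringChar F ≠ 2 := fun h2 => by
    have := FiniteField.even_card_of_char_two h2
    have := Nat.odd_iff.1 hq_odd
    omega
  have hodd : Odd (Module.finrank F E) := by
    rw [hdeg, Nat.odd_iff]
    omega
  have hcardE : Nat.card E = q ^ ((N - 2) / 2) := by
    rw [Module.natCard_eq_pow_finrank (K := F), Nat.card_eq_fintype_card, hcard, hdeg]
  refine ⟨isCompleteCap_parabolaProd hF hodd hA, (ncard_parabolaProd (E := E) A).trans ?_⟩
  rw [hcardE, hk, mul_comm]

theorem statement_2 (p h q : ℕ) (hp : p.Prime) (hp2 : p ≠ 2) (hh : 0 < h)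
    (hq : q = p ^ h)
    (F : Type) [Field F] [Fintype F] (hcard : Fintype.card F = q)
    (N : ℕ) (hN4 : N % 4 = 0) (hN : 4 ≤ N)
    (E : Type) [Field E] [Fintype E] [Algebra F E]
    (hdeg : Module.finrank F E = (N - 2) / 2)
    (A : Set (F × F)) (k : ℕ) (hA : IsBicoveringArc F A) (hk : A.ncard = k) :
    IsCompleteCap F {x : E × E × F × F | ∃ α : E, ∃ P ∈ A, x = (α, α ^ 2, P.1, P.2)} ∧
    Set.ncard {x : E × E × F × F | ∃ α : E, ∃ P ∈ A, x = (α, α ^ 2, P.1, P.2)}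
      = k * q ^ ((N - 2) / 2) :=
  statement_2_general p h q hp hp2 hq F hcard N hN4 hN E hdeg A k hA hk
end

section
/- Let q = p^h with p > 3 prime, let m be a divisor of q − 1, and let t ∈ F_q^*. Let (a,b) ∈ F_q² with a·b ≠ (a−1)³. Then (a,b) is collinear with two distinct points of K_t if and only if there exist x̃, ỹ ∈ F_q^* with x̃^m ≠ ỹ^m such that f_{a,b,t,m}(x̃, ỹ) = 0. -/
/-- The coset `K_t` of the group of nonsingular points of the nodal cubic `XY = (X-1)³`. -/
def Kt (F : Type*) [Field F] (t : F) (m : ℕ) : Set (F × F) :=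
  {P | ∃ w : F, w ≠ 0 ∧ P = (t * w ^ m, (t * w ^ m - 1) ^ 3 / (t * w ^ m))}

/-- The value of the polynomial `f_{a,b,t,m}` at `(x, y)`. -/
def fval {F : Type*} [Field F] (a b t : F) (m : ℕ) (x y : F) : F :=
  a * (t ^ 3 * x ^ (2 * m) * y ^ m + t ^ 3 * x ^ m * y ^ (2 * m)
      - 3 * t ^ 2 * x ^ m * y ^ m + 1)
    - b * t ^ 2 * x ^ m * y ^ m - t ^ 4 * x ^ (2 * m) * y ^ (2 * m)
    + 3 * t ^ 2 * x ^ m * y ^ m - t * x ^ m - t * y ^ m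


/-!
Write `u = t x^m`, `v = t y^m`, so that the points of `K_t` are `(u, (u - 1)³ / u)`. For `u ≠ v`
the collinearity determinant of `(a, b)` with the two points of parameters `u` and `v` is
`± f_{a,b,t,m}(x, y) · (u - v) / (u v)`, so it vanishes exactly when `f_{a,b,t,m}(x, y)` does.
-/

lemma Prod.exists_smul_eq_iff_cross_eq_zero {F : Type*} [Field F] {u w : F × F} (hw : w ≠ 0) :
    (∃ r : F, r • w = u) ↔ u.1 * w.2 - u.2 * w.1 = 0 := by
  constructor
  · rintro ⟨r, rfl⟩
    simp only [Prod.smul_fst, Prod.smul_snd, smul_eq_mul]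
    ring
  · intro hcross
    by_cases hw₁ : w.1 = 0
    · have hw₂ : w.2 ≠ 0 := fun hw₂ => hw (Prod.ext hw₁ hw₂)
      refine ⟨u.2 / w.2, Prod.ext ?_ ?_⟩
      · have hu₁ : u.1 = 0 := by simpa [hw₁, hw₂] using hcross
        simp [hw₁, hu₁]
      · simp [hw₂]
    · refine ⟨u.1 / w.1, Prod.ext ?_ ?_⟩
      · simp [hw₁]
      · simp only [Prod.smul_snd, smul_eq_mul]
        field_simp
        linear_combination hcross

lemma Prod.mem_affineSpan_pair_iff {F : Type*} [Field F] {A B C : F × F} (hBC : B ≠ C) :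
    A ∈ line[F, B, C] ↔ (A.1 - B.1) * (C.2 - B.2) - (A.2 - B.2) * (C.1 - B.1) = 0 := by
  conv_lhs => rw [← vsub_vadd A B]
  rw [vadd_left_mem_affineSpan_pair,
    Prod.exists_smul_eq_iff_cross_eq_zero (vsub_ne_zero.mpr hBC.symm)]
  simp only [vsub_eq_sub, Prod.fst_sub, Prod.snd_sub]

lemma collinear_insert_pair_iff_mem_affineSpan_pair {k V P : Type*} [DivisionRing k]
    [AddCommGroup V] [Module k V] [AddTorsor V P] {p₁ p₂ p₃ : P} (h : p₂ ≠ p₃) :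
    Collinear k ({p₁, p₂, p₃} : Set P) ↔ p₁ ∈ line[k, p₂, p₃] :=
  ⟨fun hcol => hcol.mem_affineSpan_of_mem_of_ne (by simp) (by simp) (by simp) h,
    collinear_insert_of_mem_affineSpan_pair⟩

def nodalPoint {F : Type*} [Field F] (u : F) : F × F := (u, (u - 1) ^ 3 / u)

/-- The polynomial `f_{a,b,t,m}` in the variables `u = t X^m`, `v = t Y^m`. -/
def secantPoly {F : Type*} [Field F] (a b u v : F) : F :=
  a * (u ^ 2 * v + u * v ^ 2 - 3 * u * v + 1) - b * u * v - u ^ 2 * v ^ 2 + 3 * u * v - u - v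

lemma fval_eq_secantPoly {F : Type*} [Field F] (a b t : F) (m : ℕ) (x y : F) :
    fval a b t m x y = secantPoly a b (t * x ^ m) (t * y ^ m) := by
  unfold fval secantPoly
  ring

lemma collinear_nodalPoint_iff {F : Type*} [Field F] (a b : F) {u v : F} (hu : u ≠ 0)
    (hv : v ≠ 0) (huv : u ≠ v) :
    Collinear F ({(a, b), nodalPoint u, nodalPoint v} : Set (F × F)) ↔ secantPoly a b u v = 0 := by
  have hne : nodalPoint u ≠ nodalPoint v := fun h => huv (congrArg Prod.fst h)
  rw [collinear_insert_pair_iff_mem_affineSpan_pair hne, Prod.mem_affineSpan_pair_iff hne]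
  have hdet : ((a - u) * ((v - 1) ^ 3 / v - (u - 1) ^ 3 / u)
        - (b - (u - 1) ^ 3 / u) * (v - u)) * (u * v) = secantPoly a b u v * (v - u) := by
    unfold secantPoly
    field_simp
    ring
  simp only [nodalPoint]
  rw [← mul_left_inj' (mul_ne_zero hu hv), hdet, zero_mul,
    mul_eq_zero, or_iff_left (sub_ne_zero.mpr huv.symm)]

theorem statement_8_general
    (F : Type) [Field F]
    (m : ℕ)
    (t : F) (ht : t ≠ 0)
    (a b : F) :
    (∃ P₁ ∈ Kt F t m, ∃ P₂ ∈ Kt F t m, P₁ ≠ P₂ ∧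
        Collinear F ({(a, b), P₁, P₂} : Set (F × F))) ↔
      ∃ x y : F, x ≠ 0 ∧ y ≠ 0 ∧ x ^ m ≠ y ^ m ∧ fval a b t m x y = 0 := by
  have hparam {x : F} (hx : x ≠ 0) : t * x ^ m ≠ 0 := mul_ne_zero ht (pow_ne_zero m hx)
  constructor
  · rintro ⟨_, ⟨x, hx, rfl⟩, _, ⟨y, hy, rfl⟩, hne, hcol⟩
    have huv : t * x ^ m ≠ t * y ^ m := fun h => hne (by rw [h])
    refine ⟨x, y, hx, hy, fun h => huv (by rw [h]), ?_⟩
    rwa [fval_eq_secantPoly, ← collinear_nodalPoint_iff a b (hparam hx) (hparam hy) huv]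
  · rintro ⟨x, y, hx, hy, hxy, hf⟩
    have huv : t * x ^ m ≠ t * y ^ m := fun h => hxy (mul_left_cancel₀ ht h)
    refine ⟨nodalPoint (t * x ^ m), ⟨x, hx, rfl⟩, nodalPoint (t * y ^ m), ⟨y, hy, rfl⟩,
      fun h => huv (congrArg Prod.fst h), ?_⟩
    rwa [collinear_nodalPoint_iff a b (hparam hx) (hparam hy) huv, ← fval_eq_secantPoly]

theorem statement_8 (p h q : ℕ) (hp : p.Prime) (hp3 : 3 < p) (hh : 0 < h)
    (hq : q = p ^ h)
    (F : Type) [Field F] [Fintype F] (hcard : Fintype.card F = q)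
    (m : ℕ) (hdvd : m ∣ q - 1)
    (t : F) (ht : t ≠ 0)
    (a b : F) (hab : a * b ≠ (a - 1) ^ 3) :
    (∃ P₁ ∈ Kt F t m, ∃ P₂ ∈ Kt F t m, P₁ ≠ P₂ ∧
        Collinear F ({(a, b), P₁, P₂} : Set (F × F))) ↔
      ∃ x y : F, x ≠ 0 ∧ y ≠ 0 ∧ x ^ m ≠ y ^ m ∧ fval a b t m x y = 0 :=
  statement_8_general F m t ht a b
end

section
/- Let K be an algebraically closed field of characteristic p > 3 and let a, b, t ∈ K with t ≠ 0, a ≠ 0, a·b ≠ (a−1)³, and not both a³ = −1 and b = 1 − (a−1)³. Then the quartic polynomial g(X,Y) = a(t³X²Y + t³XY² − 3t²XY + 1) − b·t²XY − t⁴X²Y² + 3t²XY − tX − tY is irreducible in K[X,Y]. -/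
section Aux

open Polynomial


theorem extracted_1 {K : Type} [inst : Field K] (a c t : K) (ha : a ≠ 0) (ht : t ≠ 0) (h2 : (2:K) ≠ 0)
  (hac : a * c ≠ a ^ 3 - 1) (hnot : ¬(a ^ 3 = -1 ∧ a * c = -3)) (y0 y1 y2 : K)
  (E0 : y0 * y0 = t ^ 2)
  (E1 : y0 * y1 + y1 * y0 = (2 * c - 4 * a ^ 2) * t ^ 3)
  (E2 : y0 * y2 + y1 * y1 + y2 * y0 = (c ^ 2 + 6 * a) * t ^ 4)
  (E3 : y1 * y2 + y2 * y1 = -(2 * (a * c + 2) * t ^ 5))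
  (E4 : y2 * y2 = a ^ 2 * t ^ 6) : False := by
  have h4 : (2:K)*2 ≠ 0 := mul_ne_zero h2 h2
  have ht5 : t^5*((2:K)*2) ≠ 0 := mul_ne_zero (pow_ne_zero 5 ht) h4
  have ht10 : t^10*((2:K)*2*(2*2)) ≠ 0 := mul_ne_zero (pow_ne_zero 10 ht) (mul_ne_zero h4 h4)
  have hs2 : y2 = a*t^3 ∨ y2 = -(a*t^3) := by
    rcases mul_eq_zero.mp (show (y2 - a*t^3)*(y2 + a*t^3) = 0 by linear_combination E4) with h|h
    · exact Or.inl (sub_eq_zero.mp h)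
    · exact Or.inr (eq_neg_of_add_eq_zero_left h)
  have hs0 : y0 = t ∨ y0 = -t := by
    rcases mul_eq_zero.mp (show (y0 - t)*(y0 + t) = 0 by linear_combination E0) with h|h
    · exact Or.inl (sub_eq_zero.mp h)
    · exact Or.inr (eq_neg_of_add_eq_zero_left h)
  rcases hs2 with h1 | h1 <;> rcases hs0 with h0 | h0 <;> rw [h0] at E1 E2 <;> rw [h1] at E2 E3
  -- case A: y2 = a t^3, y0 = t
  · have hfin : t^5*((2:K)*2) * (a*c - (a^3-1)) = 0 := by linear_combination E3 - (a*t^2)*E1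
    exact hac (sub_eq_zero.mp ((mul_eq_zero.mp hfin).resolve_left ht5))
  -- case B: y2 = a t^3, y0 = -t
  · have hA : t^5*((2:K)*2) * (a^3 + 1) = 0 := by linear_combination E3 + (a*t^2)*E1
    have ha3 : a^3 = -1 := eq_neg_of_add_eq_zero_left ((mul_eq_zero.mp hA).resolve_left ht5)
    have hC : t^10*((2:K)*2*(2*2)) * (a*c + 3) = 0 := by
      linear_combination (2*(a*c+2)*t^5 - 2*a*t^3*y1) * E3 + 4*a^2*t^6 * E2 + 32*t^10 * ha3
    exact hnot ⟨ha3, eq_neg_of_add_eq_zero_left ((mul_eq_zero.mp hC).resolve_left ht10)⟩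
  -- case C: y2 = -(a t^3), y0 = t
  · have hA : t^5*((2:K)*2) * (a^3 + 1) = 0 := by linear_combination E3 + (a*t^2)*E1
    have ha3 : a^3 = -1 := eq_neg_of_add_eq_zero_left ((mul_eq_zero.mp hA).resolve_left ht5)
    have hC : t^10*((2:K)*2*(2*2)) * (a*c + 3) = 0 := by
      linear_combination (2*a*t^3*y1 + 2*(a*c+2)*t^5) * E3 + 4*a^2*t^6 * E2 + 32*t^10 * ha3
    exact hnot ⟨ha3, eq_neg_of_add_eq_zero_left ((mul_eq_zero.mp hC).resolve_left ht10)⟩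
  -- case D
  · have hfin : t^5*((2:K)*2) * (a*c - (a^3-1)) = 0 := by linear_combination E3 - (a*t^2)*E1
    exact hac (sub_eq_zero.mp ((mul_eq_zero.mp hfin).resolve_left ht5))

open Polynomial

set_option maxHeartbeats 1000000 in
lemma notSquare {K : Type} [Field K] (a c t : K) (ha : a ≠ 0) (ht : t ≠ 0)
    (h2 : (2:K) ≠ 0) (hac : a * c ≠ a ^ 3 - 1) (hnot : ¬(a ^ 3 = -1 ∧ a * c = -3))
    (y : K[X]) :
    y ^ 2 ≠ C (t^2) + C ((2*c - 4*a^2)*t^3) * X + C ((c^2 + 6*a)*t^4) * X^2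
      + C (-(2*(a*c+2))*t^5) * X^3 + C (a^2*t^6) * X^4 := by
  intro h
  have he4 : a^2*t^6 ≠ 0 := mul_ne_zero (pow_ne_zero _ ha) (pow_ne_zero _ ht)
  have hdeg : (C (t^2) + C ((2*c - 4*a^2)*t^3) * X + C ((c^2 + 6*a)*t^4) * X^2
      + C (-(2*(a*c+2))*t^5) * X^3 + C (a^2*t^6) * X^4).natDegree = 4 := by
    compute_degree!
  have hydeg : y.natDegree = 2 := by
    have := congrArg natDegree h
    rw [natDegree_pow, hdeg] at this
    omega
  have hc3 : y.coeff 3 = 0 := coeff_eq_zero_of_natDegree_lt (by omega)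
  have hc4 : y.coeff 4 = 0 := coeff_eq_zero_of_natDegree_lt (by omega)
  have key : ∀ k, (y*y).coeff k = (C (t^2) + C ((2*c - 4*a^2)*t^3) * X + C ((c^2 + 6*a)*t^4) * X^2
      + C (-(2*(a*c+2))*t^5) * X^3 + C (a^2*t^6) * X^4).coeff k := by
    intro k; rw [← sq, h]
  have E0 := key 0
  have E1 := key 1
  have E2 := key 2
  have E3 := key 3
  have E4 := key 4
  simp only [coeff_mul, Finset.Nat.sum_antidiagonal_eq_sum_range_succ_mk, Finset.sum_range_succ,
    Finset.sum_range_zero, coeff_add, coeff_C_mul, coeff_X_pow, coeff_C, coeff_X, hc3, hc4,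
    zero_add, add_zero, mul_zero, zero_mul, mul_one, mul_zero] at E0 E1 E2 E3 E4
  norm_num at E0 E1 E2 E3 E4

  exact extracted_1 a c t ha ht h2 hac hnot _ _ _ E0 E1 E2 E3 E4

set_option maxHeartbeats 1000000 in
lemma quadIrred {K : Type} [Field K] (a b t : K) (ha : a ≠ 0) (ht : t ≠ 0)
    (h2 : (2:K) ≠ 0) (hab : a * b ≠ (a - 1) ^ 3)
    (hnot : ¬(a ^ 3 = -1 ∧ b = 1 - (a - 1) ^ 3)) :
    Irreducible (C (C (a*t^3) * X - C (t^4) * X^2) * X^2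
      + C (C (a*t^3) * X^2 - C ((3*a+b-3)*t^2) * X - C t) * X
      + C (C a - C t * X) : (Polynomial K)[X]) := by
  set c : K := 3*a+b-3 with hc
  have hac : a * c ≠ a ^ 3 - 1 := by
    intro h; apply hab; linear_combination h
  have hnot' : ¬(a ^ 3 = -1 ∧ a * c = -3) := by
    rintro ⟨h1, h3⟩
    refine hnot ⟨h1, mul_left_cancel₀ ha ?_⟩
    linear_combination h3 + (a-3)*h1
  set A : K[X] := C (a*t^3) * X - C (t^4) * X^2 with hA
  set B : K[X] := C (a*t^3) * X^2 - C (c*t^2) * X - C t with hB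
  set Co : K[X] := C a - C t * X with hCo
  have hΔ : B^2 - 4*A*Co = C (t^2) + C ((2*c - 4*a^2)*t^3) * X + C ((c^2 + 6*a)*t^4) * X^2
      + C (-(2*(a*c+2))*t^5) * X^3 + C (a^2*t^6) * X^4 := by
    rw [hA, hB, hCo]
    simp only [map_mul, map_add, map_sub, map_pow, map_ofNat, map_neg]
    ring
  -- primitivity
  have hd : t*(a^3 - a*c - 1) ≠ 0 := by
    refine mul_ne_zero ht fun h => hac ?_
    linear_combination -h
  have hprim : (C A * X^2 + C B * X + C Co : (K[X])[X]).IsPrimitive := by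
    intro r hr
    rw [Polynomial.C_dvd_iff_dvd_coeff] at hr
    have h0 : r ∣ Co := by simpa using hr 0
    have h1 : r ∣ B := by simpa using hr 1
    have hcomb : B + (C (a*t^2) * X + C ((a^2-c)*t)) * Co = C (t*(a^3 - a*c - 1)) := by
      rw [hB, hCo]
      simp only [map_mul, map_add, map_sub, map_pow, map_ofNat, map_neg, map_one]
      ring
    have : r ∣ C (t*(a^3 - a*c - 1)) := hcomb ▸ dvd_add h1 (Dvd.dvd.mul_left h0 _)
    exact isUnit_of_dvd_unit this (isUnit_C.mpr (Ne.isUnit hd))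
  letI := Classical.decEq K
  rw [hprim.irreducible_iff_irreducible_map_fraction_map (K := FractionRing (K[X]))]
  set φ := algebraMap (K[X]) (FractionRing (K[X])) with hφ
  rw [Polynomial.map_add, Polynomial.map_add, Polynomial.map_mul, Polynomial.map_mul,
    Polynomial.map_pow, Polynomial.map_C, Polynomial.map_C, Polynomial.map_C, Polynomial.map_X]
  have hAco : A.coeff 1 = a * t^3 := by
    rw [hA]
    simp only [coeff_sub, coeff_C_mul, coeff_X_one, coeff_X_pow]
    norm_num
  have hAne : φ A ≠ 0 := by
    rw [map_ne_zero_iff φ (IsFractionRing.injective _ _)]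
    intro h
    rw [h] at hAco
    exact (mul_ne_zero ha (pow_ne_zero 3 ht)) (by simpa using hAco.symm)
  have hdeg : (C (φ A) * X^2 + C (φ B) * X + C (φ Co)).natDegree = 2 :=
    natDegree_quadratic hAne
  rw [irreducible_iff_roots_eq_zero_of_degree_le_three (by omega) (by omega)]
  rw [Multiset.eq_zero_iff_forall_notMem]
  intro x hx
  rw [mem_roots'] at hx
  obtain ⟨hne, hx⟩ := hx
  rw [IsRoot] at hx
  rw [eval_add, eval_add, eval_mul, eval_mul, eval_pow, eval_C, eval_C, eval_C, eval_X] at hx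
  have hx2 : φ A * (x*x) + φ B * x + φ Co = 0 := by linear_combination hx
  refine quadratic_ne_zero_of_discrim_ne_sq (R := FractionRing K[X])
    (a := φ A) (b := φ B) (c := φ Co) (fun s hs => ?_) x hx2
  rw [discrim] at hs
  have hs' : φ (B^2 - 4*A*Co) = s^2 := by
    rw [map_sub, map_pow, map_mul, map_mul, map_ofNat]; exact hs
  have hint : IsIntegral (K[X]) s := by
    refine ⟨X^2 - C (B^2 - 4*A*Co), monic_X_pow_sub_C _ two_ne_zero, ?_⟩
    rw [eval₂_sub, eval₂_pow, eval₂_X, eval₂_C, hs', sub_self]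
  obtain ⟨y, hy⟩ := IsIntegrallyClosed.isIntegral_iff.mp hint
  apply notSquare a c t ha ht h2 hac hnot' y
  apply IsFractionRing.injective (K[X]) (FractionRing (K[X]))
  rw [map_pow, hy, ← hΔ]
  exact hs'.symm

end Aux

open MvPolynomial

theorem statement_10 (K : Type) [Field K] [IsAlgClosed K]
    (p : ℕ) [CharP K p] (hp : p.Prime) (hp3 : 3 < p)
    (a b t : K) (ht : t ≠ 0) (ha : a ≠ 0) (hab : a * b ≠ (a - 1) ^ 3)
    (hnot : ¬(a ^ 3 = -1 ∧ b = 1 - (a - 1) ^ 3)) :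
    Irreducible (C a * (C t ^ 3 * X 0 ^ 2 * X 1 + C t ^ 3 * X 0 * X 1 ^ 2
        - 3 * C t ^ 2 * X 0 * X 1 + 1)
      - C b * C t ^ 2 * X 0 * X 1 - C t ^ 4 * X 0 ^ 2 * X 1 ^ 2
      + 3 * C t ^ 2 * X 0 * X 1 - C t * X 0 - C t * X 1 :
        MvPolynomial (Fin 2) K) := by
  have hp2 : (2 : K) ≠ 0 := by
    intro h
    rw [show ((2:K)) = ((2:ℕ):K) by norm_cast, CharP.cast_eq_zero_iff K p 2] at h
    have := Nat.le_of_dvd (by norm_num) h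
    omega
  let ψ : MvPolynomial (Fin 1) K ≃+* Polynomial K :=
    ((renameEquiv K finOneEquiv).trans (pUnitAlgEquiv K)).toRingEquiv
  let e : MvPolynomial (Fin 2) K ≃+* Polynomial (Polynomial K) :=
    (finSuccEquiv K 1).toRingEquiv.trans (Polynomial.mapEquiv ψ)
  have hψC : ∀ k : K, ψ (MvPolynomial.C k) = Polynomial.C k := by
    intro k
    simp [ψ]
  have hψX : ψ (MvPolynomial.X 0) = Polynomial.X := by
    simp [ψ]
  have heC : ∀ k : K, e (MvPolynomial.C k) = Polynomial.C (Polynomial.C k) := by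
    intro k
    simp only [e, RingEquiv.trans_apply, AlgEquiv.toRingEquiv_eq_coe, AlgEquiv.coe_ringEquiv]
    rw [show (finSuccEquiv K 1) (C k) = Polynomial.C (C k) from by simp [finSuccEquiv_apply]]
    simp [Polynomial.mapEquiv_apply, hψC]
  have he0 : e (X 0) = Polynomial.X := by
    simp only [e, RingEquiv.trans_apply, AlgEquiv.toRingEquiv_eq_coe, AlgEquiv.coe_ringEquiv]
    rw [finSuccEquiv_X_zero]
    simp [Polynomial.mapEquiv_apply]
  have he1 : e (X 1) = Polynomial.C Polynomial.X := by
    simp only [e, RingEquiv.trans_apply, AlgEquiv.toRingEquiv_eq_coe, AlgEquiv.coe_ringEquiv]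
    rw [show (X 1 : MvPolynomial (Fin 2) K) = X (Fin.succ 0) from rfl, finSuccEquiv_X_succ]
    simp [Polynomial.mapEquiv_apply, hψX]
  apply (MulEquiv.irreducible_iff e).mp
  have heq : e (C a * (C t ^ 3 * X 0 ^ 2 * X 1 + C t ^ 3 * X 0 * X 1 ^ 2
        - 3 * C t ^ 2 * X 0 * X 1 + 1)
      - C b * C t ^ 2 * X 0 * X 1 - C t ^ 4 * X 0 ^ 2 * X 1 ^ 2
      + 3 * C t ^ 2 * X 0 * X 1 - C t * X 0 - C t * X 1 :
        MvPolynomial (Fin 2) K) = (Polynomial.C (Polynomial.C (a*t^3) * Polynomial.X - Polynomial.C (t^4) * Polynomial.X^2) * Polynomial.X^2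
      + Polynomial.C (Polynomial.C (a*t^3) * Polynomial.X^2 - Polynomial.C ((3*a+b-3)*t^2) * Polynomial.X - Polynomial.C t) * Polynomial.X
      + Polynomial.C (Polynomial.C a - Polynomial.C t * Polynomial.X)) := by
    simp only [map_add, map_sub, map_mul, map_pow, map_ofNat, map_one, heC, he0, he1]
    ring
  rw [heq]
  exact quadIrred a b t ha ht hp2 hab hnot
end

section
/- Let K be an algebraically closed field of characteristic p > 3 and let b, t ∈ K with t ≠ 0. Then the quartic polynomial −b·t²XY − t⁴X²Y² + 3t²XY − tX − tY is irreducible in K[X,Y]. -/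
/-!
Viewed as a quadratic in `Y` over `K[X]`, the polynomial is primitive, so by Gauss's lemma it is
irreducible as soon as it has no root in `K(X)`. A root would make its discriminant a square in
`K(X)`, hence in the integrally closed ring `K[X]`; but the discriminant
`(t² (3 - b) X - t)² - 4 t⁵ X³` has degree `3` once `4 ≠ 0`, so it is not a square.
-/

theorem IsIntegrallyClosed.isSquare_of_isSquare_algebraMap {R : Type*} [CommRing R] [IsDomain R]
    [IsIntegrallyClosed R] (F : Type*) [Field F] [Algebra R F] [IsFractionRing R F] {d : R}
    (h : IsSquare (algebraMap R F d)) : IsSquare d := by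
  obtain ⟨s, hs⟩ := h
  obtain ⟨r, hr⟩ := IsIntegrallyClosed.exists_algebraMap_eq_of_isIntegral_pow (R := R) (x := s)
    two_pos (by rw [sq, ← hs]; exact isIntegral_algebraMap)
  exact ⟨r, IsFractionRing.injective R F (by rw [hs, map_mul, hr])⟩

namespace Polynomial

theorem irreducible_of_not_isSquare_discrim {R : Type*} [CommRing R] [IsDomain R] [IsGCDMonoid R]
    {a b c : R} (ha : a ≠ 0) (hprim : (C a * X ^ 2 + C b * X + C c).IsPrimitive)
    (hd : ¬ IsSquare (discrim a b c)) : Irreducible (C a * X ^ 2 + C b * X + C c) := by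
  let F := FractionRing R
  let φ := algebraMap R F
  rw [hprim.irreducible_iff_irreducible_map_fraction_map (K := F)]
  have hmap : (C a * X ^ 2 + C b * X + C c).map φ = C (φ a) * X ^ 2 + C (φ b) * X + C (φ c) := by
    simp
  have ha' : φ a ≠ 0 := (map_ne_zero_iff _ (IsFractionRing.injective R F)).mpr ha
  rw [hmap]
  refine irreducible_of_degree_le_three_of_not_isRoot (by simp [natDegree_quadratic ha'])
    fun x hx => hd (IsIntegrallyClosed.isSquare_of_isSquare_algebraMap F ?_)
  have hroot : φ a * (x * x) + φ b * x + φ c = 0 := by simpa [sq] using hx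
  refine ⟨2 * φ a * x + φ b, ?_⟩
  rw [← sq, ← discrim_eq_sq_of_quadratic_eq_zero hroot]
  simp only [discrim, φ, map_sub, map_mul, map_pow, map_ofNat]

theorem not_isSquare_of_odd_natDegree {R : Type*} [CommRing R] [NoZeroDivisors R] {f : R[X]}
    (hf : Odd f.natDegree) : ¬ IsSquare f := by
  rintro ⟨r, rfl⟩
  rcases eq_or_ne r 0 with rfl | hr
  · simp at hf
  · rw [natDegree_mul hr hr] at hf
    exact Nat.not_odd_iff_even.mpr ⟨_, rfl⟩ hf

end Polynomial

section Quartic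

open Polynomial

variable {K : Type*} [Field K] (b t : K)

theorem isPrimitive_quartic (ht : t ≠ 0) :
    (C (-(C (t ^ 4) * X ^ 2)) * X ^ 2 + C (C ((3 - b) * t ^ 2) * X - C t) * X
      + C (-(C t * X)) : K[X][X]).IsPrimitive := by
  intro r hr
  rw [C_dvd_iff_dvd_coeff] at hr
  have h0 : r ∣ C t * X := by simpa using hr 0
  have h1 : r ∣ C ((3 - b) * t ^ 2) * X - C t := by
    simpa [coeff_mul_X_pow', -map_mul, -map_sub, -map_pow] using hr 1
  have hCt : r ∣ C t := by
    have : C t = C ((3 - b) * t) * (C t * X) - (C ((3 - b) * t ^ 2) * X - C t) := by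
      simp only [map_mul, map_pow]; ring
    rw [this]
    exact dvd_sub (h0.mul_left _) h1
  exact isUnit_of_dvd_unit hCt (isUnit_C.mpr ht.isUnit)

theorem natDegree_discrim_quartic (ht : t ≠ 0) (h4 : (4 : K) ≠ 0) :
    (discrim (-(C (t ^ 4) * X ^ 2)) (C ((3 - b) * t ^ 2) * X - C t) (-(C t * X))).natDegree
      = 3 := by
  have : discrim (-(C (t ^ 4) * X ^ 2)) (C ((3 - b) * t ^ 2) * X - C t) (-(C t * X))
      = C (-(4 * t ^ 5)) * X ^ 3 + C (((3 - b) * t ^ 2) ^ 2) * X ^ 2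
        + C (-(2 * ((3 - b) * t ^ 2) * t)) * X + C (t ^ 2) := by
    simp only [discrim, map_neg, map_mul, map_pow, map_ofNat]
    ring
  rw [this]
  compute_degree!

theorem irreducible_quartic (ht : t ≠ 0) (h4 : (4 : K) ≠ 0) :
    Irreducible (C (-(C (t ^ 4) * X ^ 2)) * X ^ 2 + C (C ((3 - b) * t ^ 2) * X - C t) * X
      + C (-(C t * X)) : K[X][X]) :=
  irreducible_of_not_isSquare_discrim (by simp [ht]) (isPrimitive_quartic b t ht)
    (not_isSquare_of_odd_natDegree (by rw [natDegree_discrim_quartic b t ht h4]; decide))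

end Quartic

open MvPolynomial

theorem statement_12_general (K : Type) [Field K]
    (p : ℕ) [CharP K p] (hp : p.Prime) (hp3 : 3 < p)
    (b t : K) (ht : t ≠ 0) :
    Irreducible (-(C b * C t ^ 2 * X 0 * X 1) - C t ^ 4 * X 0 ^ 2 * X 1 ^ 2
      + 3 * C t ^ 2 * X 0 * X 1 - C t * X 0 - C t * X 1 :
        MvPolynomial (Fin 2) K) := by
  have h4 : (4 : K) ≠ 0 := by
    rw [← Nat.cast_ofNat, ne_eq, CharP.cast_eq_zero_iff K p]
    intro hdvd
    obtain rfl : p = 4 := le_antisymm (Nat.le_of_dvd four_pos hdvd) hp3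
    norm_num at hp
  rw [← MulEquiv.irreducible_iff (Polynomial.Bivariate.equivMvPolynomial K).symm]
  convert irreducible_quartic b t ht h4 using 1
  simp only [map_sub, map_add, map_mul, map_pow, map_neg, map_ofNat,
    Polynomial.Bivariate.equivMvPolynomial_symm_C, Polynomial.Bivariate.equivMvPolynomial_symm_X_0,
    Polynomial.Bivariate.equivMvPolynomial_symm_X_1]
  ring

theorem statement_12 (K : Type) [Field K] [IsAlgClosed K]
    (p : ℕ) [CharP K p] (hp : p.Prime) (hp3 : 3 < p)
    (b t : K) (ht : t ≠ 0) :
    Irreducible (-(C b * C t ^ 2 * X 0 * X 1) - C t ^ 4 * X 0 ^ 2 * X 1 ^ 2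
      + 3 * C t ^ 2 * X 0 * X 1 - C t * X 0 - C t * X 1 :
        MvPolynomial (Fin 2) K) :=
  statement_12_general K p hp hp3 b t ht
end

section
/- Let K be an algebraically closed field of characteristic p > 3, let m be a positive integer not divisible by p, and let a, t ∈ K with a³ = −1 and t ≠ 0. Then the polynomial a² + t²X^mY^m − a·t·X^m is irreducible in K[X,Y]. -/
/-!
Over `K[x]` with `x = X 0`, the polynomial is `A * Y ^ m + B` in `Y = X 1`, where `A = t² x^m` and
`B = a (a - t x^m)`. Pick `r` with `t r^m = a`. Since `p ∤ m`, `x^m - a/t` is separable, so `x - r`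
divides `B` exactly once and does not divide `A`; and `A / (a t) + B / a² = 1` makes `A * Y ^ m + B`
primitive. Eisenstein's criterion at the prime `x - r` gives irreducibility.
-/

namespace MvPolynomial

variable (K : Type*) [CommRing K]

noncomputable def finTwoEquivPolynomialPolynomial :
    MvPolynomial (Fin 2) K ≃ₐ[K] Polynomial (Polynomial K) :=
  (renameEquiv K (Equiv.swap 0 1)).trans
    ((finSuccEquiv K 1).trans (Polynomial.mapAlgEquiv (uniqueAlgEquiv K (Fin 1))))

variable {K}

@[simp]
theorem finTwoEquivPolynomialPolynomial_X_zero :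
    finTwoEquivPolynomialPolynomial K (X 0) = Polynomial.C Polynomial.X := by
  simp only [finTwoEquivPolynomialPolynomial, AlgEquiv.trans_apply, renameEquiv_apply, rename_X]
  rw [Equiv.swap_apply_left, show (1 : Fin 2) = Fin.succ 0 from rfl, finSuccEquiv_X_succ]
  simp

@[simp]
theorem finTwoEquivPolynomialPolynomial_X_one :
    finTwoEquivPolynomialPolynomial K (X 1) = Polynomial.X := by
  simp [finTwoEquivPolynomialPolynomial, finSuccEquiv_X_zero]

@[simp]
theorem finTwoEquivPolynomialPolynomial_C (k : K) :
    finTwoEquivPolynomialPolynomial K (C k) = Polynomial.C (Polynomial.C k) :=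
  (finTwoEquivPolynomialPolynomial K).commutes k

end MvPolynomial

namespace Polynomial

theorem irreducible_C_mul_X_pow_add_C_of_prime {R : Type*} [CommRing R] [IsDomain R]
    {A B π : R} {m : ℕ} (hm : 0 < m) (hπ : Prime π) (hA : ¬π ∣ A) (hB : π ∣ B)
    (hB2 : ¬π ^ 2 ∣ B) (hAB : IsCoprime A B) : Irreducible (C A * X ^ m + C B) := by
  set f := C A * X ^ m + C B
  have hA0 : A ≠ 0 := by rintro rfl; exact hA (dvd_zero π)
  have hdeg : f.natDegree = m := by rw [natDegree_add_C, natDegree_C_mul_X_pow m A hA0]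
  have hcoeff_m : f.coeff m = A := by simp [f, coeff_C, hm.ne']
  have hcoeff_0 : f.coeff 0 = B := by simp [f, hm.ne]
  have hlead : f.leadingCoeff = A := by rw [leadingCoeff, hdeg, hcoeff_m]
  have hEisenstein : f.IsEisensteinAt (Ideal.span {π}) := by
    refine ⟨by rwa [hlead, Ideal.mem_span_singleton], fun {n} hn => ?_, ?_⟩
    · rw [hdeg] at hn
      rcases Nat.eq_zero_or_pos n with rfl | hn0
      · rwa [hcoeff_0, Ideal.mem_span_singleton]
      · simp [f, coeff_C, hn.ne, hn0.ne']
    · rwa [hcoeff_0, Ideal.span_singleton_pow, Ideal.mem_span_singleton]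
  have hprimitive : f.IsPrimitive := fun r hr => by
    rw [C_dvd_iff_dvd_coeff] at hr
    exact hAB.isUnit_of_dvd' (hcoeff_m ▸ hr m) (hcoeff_0 ▸ hr 0)
  exact hEisenstein.irreducible ((Ideal.span_singleton_prime hπ.ne_zero).2 hπ) hprimitive
    (hdeg ▸ hm)

theorem irreducible_C_sq_mul_X_pow_mul_X_pow_add_C {K : Type*} [Field K] {m : ℕ}
    (hm : (m : K) ≠ 0) {a t r : K} (ha : a ≠ 0) (ht : t ≠ 0) (hr : t * r ^ m = a) :
    Irreducible (C (C t ^ 2 * X ^ m) * X ^ m + C (C a * (C a - C t * X ^ m))) := by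
  have hm0 : 0 < m := Nat.pos_of_ne_zero (by rintro rfl; simp at hm)
  have hr0 : r ≠ 0 := by rintro rfl; simp [hm0.ne', ha.symm] at hr
  have hC_mul_inv : ∀ {x : K}, x ≠ 0 → C x * C x⁻¹ = 1 := fun hx => by
    rw [← C_mul, mul_inv_cancel₀ hx, C_1]
  refine irreducible_C_mul_X_pow_add_C_of_prime hm0 (prime_X_sub_C r) ?_ ?_ ?_ ?_
  · rw [dvd_iff_isRoot]
    simp [IsRoot, ht, hr0]
  · rw [dvd_iff_isRoot]
    simp [IsRoot, hr]
  · intro hsq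
    have hB : C a * (C a - C t * X ^ m) = C (-(a * t)) * (X ^ m - C (t⁻¹ * a)) := by
      simp only [map_neg, map_mul]
      linear_combination (-C a ^ 2) * hC_mul_inv ht
    have hsep := separable_X_pow_sub_C (t⁻¹ * a) hm (mul_ne_zero (inv_ne_zero ht) ha)
    rw [hB, (isUnit_C.2 (neg_ne_zero.2 (mul_ne_zero ha ht)).isUnit).dvd_mul_left, pow_two] at hsq
    exact not_isUnit_X_sub_C r (hsep.squarefree _ hsq)
  · refine ⟨C a⁻¹ * C t⁻¹, C a⁻¹ ^ 2, ?_⟩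
    linear_combination (C a⁻¹ * C t * X ^ m) * hC_mul_inv ht
      + (C a⁻¹ * C a + 1 - C a⁻¹ * C t * X ^ m) * hC_mul_inv ha

end Polynomial

open MvPolynomial

theorem statement_15_general (K : Type) [Field K] [IsAlgClosed K]
    (p : ℕ) [CharP K p]
    (m : ℕ) (hm : 0 < m) (hpm : ¬ (p ∣ m))
    (a t : K) (ha : a ^ 3 = -1) (ht : t ≠ 0) :
    Irreducible (C a ^ 2 + C t ^ 2 * X 0 ^ m * X 1 ^ m - C a * C t * X 0 ^ m :
        MvPolynomial (Fin 2) K) := by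
  have ha0 : a ≠ 0 := by rintro rfl; norm_num at ha
  have hmK : (m : K) ≠ 0 := by rwa [Ne, CharP.cast_eq_zero_iff K p]
  obtain ⟨r, hr⟩ := IsAlgClosed.exists_pow_nat_eq (a / t) hm
  rw [← MulEquiv.irreducible_iff (finTwoEquivPolynomialPolynomial K)]
  convert Polynomial.irreducible_C_sq_mul_X_pow_mul_X_pow_add_C hmK ha0 ht
    (r := r) (by rw [hr, mul_div_cancel₀ _ ht]) using 1
  simp only [map_sub, map_add, map_mul, map_pow, finTwoEquivPolynomialPolynomial_X_zero,
    finTwoEquivPolynomialPolynomial_X_one, finTwoEquivPolynomialPolynomial_C]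
  ring

theorem statement_15 (K : Type) [Field K] [IsAlgClosed K]
    (p : ℕ) [CharP K p] (hp : p.Prime) (hp3 : 3 < p)
    (m : ℕ) (hm : 0 < m) (hpm : ¬ (p ∣ m))
    (a t : K) (ha : a ^ 3 = -1) (ht : t ≠ 0) :
    Irreducible (C a ^ 2 + C t ^ 2 * X 0 ^ m * X 1 ^ m - C a * C t * X 0 ^ m :
        MvPolynomial (Fin 2) K) :=
  statement_15_general K p m hm hpm a t ha ht
end

section
/- Let K be an algebraically closed field of characteristic p > 3, let m be an odd positive integer not divisible by p, and let a, t ∈ K with a³ = −1 and t ≠ 0. Then the polynomial a² + t²X^mY^m − a·t·X^m is irreducible in K[X,Y], and in the fraction field of the integral domain K[X,Y]/(a² + t²X^mY^m − a·t·X^m) the residue class of (a − tX^m)(a − tY^m) is not a square. -/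
/-!
Regard `f = a² + t² x^m y^m − a t x^m` as the polynomial `c(y) x^m + a²` in `x` over `K[y]`,
with `c(y) = t² y^m − a t = t² (y^m − a/t)`. Over `K(y)` its roots are the `m`-th roots of
`r = −a²/c(y)`, and `1/r` has a simple zero at every root of the separable polynomial
`y^m − a/t`, so `r` is not a `q`-th power for any prime `q ∣ m`; since `m` is odd, `x^m − r` is
irreducible. The constant coefficient `a²` makes `f` primitive, so Gauss's lemma gives
irreducibility in `K[x,y]`, and `K[x,y]/(f)` embeds into `L = K(y)[x]/(f)`, a field of odd
degree `m` over `K(y)`. There `(a − t x^m)(a − t y^m) = f − a t y^m` becomes `−a t y^m`, which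
has odd order at `y = 0` and so is not a square in `K(y)`; squares descend along extensions of
odd degree, so it is not a square in `L` either.
-/

section

open Polynomial

theorem isSquare_of_isSquare_algebraMap_of_odd_finrank {F L : Type*} [Field F] [Field L]
    [Algebra F L] [FiniteDimensional F L] (hodd : Odd (Module.finrank F L)) {s : F}
    (h : IsSquare (algebraMap F L s)) : IsSquare s := by
  obtain ⟨u, hu⟩ := h
  have hroot : aeval u (X ^ 2 - C s) = 0 := by simp [hu, sq]
  have hint : IsIntegral F u := ⟨_, monic_X_pow_sub_C s two_ne_zero, by simpa using hroot⟩
  have hle : (minpoly F u).natDegree ≤ 2 := by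
    simpa using natDegree_le_of_dvd (minpoly.dvd F u hroot) (X_pow_sub_C_ne_zero two_pos s)
  have hdeg_odd : Odd (minpoly F u).natDegree := hodd.of_dvd_nat (minpoly.degree_dvd hint)
  have hdeg : (minpoly F u).natDegree = 1 := by
    have := minpoly.natDegree_pos hint
    interval_cases h : (minpoly F u).natDegree
    · rfl
    · exact absurd hdeg_odd (by decide)
  obtain ⟨v, hv⟩ := minpoly.natDegree_eq_one_iff.mp hdeg
  exact ⟨v, (algebraMap F L).injective (by rw [map_mul, hv, hu])⟩

section RationalFunctions

variable {K F : Type*} [Field K] [Field F] [Algebra K[X] F] [IsFractionRing K[X] F]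

theorem not_pow_eq_algebraMap_of_not_dvd_rootMultiplicity {c : K[X]} {q : ℕ} {z : K}
    (h : ¬ q ∣ rootMultiplicity z c) (b : F) : b ^ q ≠ algebraMap K[X] F c := by
  classical
  intro hb
  rcases eq_or_ne q 0 with rfl | hq
  · rw [pow_zero, ← map_one (algebraMap K[X] F), (IsFractionRing.injective K[X] F).eq_iff] at hb
    simp [← hb] at h
  have hint : IsIntegral K[X] b := ⟨_, monic_X_pow_sub_C c hq, by simp [hb]⟩
  obtain ⟨d, rfl⟩ := IsIntegrallyClosed.isIntegral_iff.mp hint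
  rw [← map_pow, (IsFractionRing.injective K[X] F).eq_iff] at hb
  rw [← hb, ← count_roots, roots_pow, Multiset.count_nsmul] at h
  exact h (dvd_mul_right q _)

theorem not_isSquare_algebraMap_C_mul_X_pow {k : K} (hk : k ≠ 0) {m : ℕ} (hodd : Odd m) :
    ¬ IsSquare (algebraMap K[X] F (C k * X ^ m)) := by
  classical
  rintro ⟨b, hb⟩
  refine not_pow_eq_algebraMap_of_not_dvd_rootMultiplicity (c := C k * X ^ m) (z := 0) ?_ b
    (by rw [hb, sq])
  rwa [← count_roots, roots_C_mul_X_pow hk, Multiset.count_nsmul, Multiset.count_singleton_self,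
    mul_one, ← even_iff_two_dvd, Nat.not_even_iff_odd]

end RationalFunctions

theorem exists_rootMultiplicity_eq_one {K : Type*} [Field K] [IsAlgClosed K] {P : K[X]}
    (hsep : P.Separable) (hdeg : P.degree ≠ 0) : ∃ z, rootMultiplicity z P = 1 := by
  obtain ⟨z, hz⟩ := IsAlgClosed.exists_root P hdeg
  exact ⟨z, le_antisymm (rootMultiplicity_le_one_of_separable hsep z)
    ((rootMultiplicity_pos hsep.ne_zero).mpr hz)⟩

theorem irreducible_C_mul_X_pow_add_C {F : Type*} [Field F] {α β : F} (hβ : β ≠ 0) {m : ℕ}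
    (hm : Odd m) (h : ∀ q : ℕ, q.Prime → q ∣ m → ∀ b : F, b ^ q ≠ -β / α) :
    Irreducible (C β * X ^ m + C α) := by
  have hfactor : C β * X ^ m + C α = C β * (X ^ m - C (-α / β)) := by
    rw [mul_sub, ← C_mul, mul_div_cancel₀ _ hβ, C_neg, sub_neg_eq_add]
  rw [hfactor, irreducible_isUnit_mul (isUnit_C.mpr hβ.isUnit)]
  refine X_pow_sub_C_irreducible_of_odd hm fun q hq hqm b hb => h q hq hqm b⁻¹ ?_
  rw [inv_pow, hb, inv_div, neg_div, div_neg]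

theorem natDegree_C_mul_X_pow_add_C {R : Type*} [Semiring R] {α β : R} (hβ : β ≠ 0) (m : ℕ) :
    (C β * X ^ m + C α).natDegree = m := by
  rw [natDegree_add_C, natDegree_C_mul_X_pow m β hβ]

section Gauss

variable {R S : Type*} [CommRing R] [IsDomain R] [NormalizedGCDMonoid R] [CommRing S]
  (F : Type*) [Field F] [Algebra R F] [IsFractionRing R F]

theorem ker_adjoinRoot_mk_map_comp_ringEquiv (e : S ≃+* R[X]) {f : S} {p : R[X]} (hfp : e f = p)
    (hp : p.IsPrimitive) :
    RingHom.ker (((AdjoinRoot.mk (p.map (algebraMap R F))).comp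
      (mapRingHom (algebraMap R F))).comp (e : S →+* R[X])) = Ideal.span {f} := by
  ext g
  rw [RingHom.mem_ker, Ideal.mem_span_singleton, ← map_dvd_iff e, hfp]
  simp [AdjoinRoot.mk_eq_zero, hp.dvd_iff_fraction_map_dvd_fraction_map F]

theorem exists_fractionRing_quotient_hom_adjoinRoot (e : S ≃+* R[X]) {f : S} {p : R[X]}
    (hfp : e f = p) (hp : p.IsPrimitive) [Fact (Irreducible (p.map (algebraMap R F)))]
    [IsDomain (S ⧸ Ideal.span {f})] :
    ∃ Φ : FractionRing (S ⧸ Ideal.span {f}) →+* AdjoinRoot (p.map (algebraMap R F)),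
      ∀ g, Φ (algebraMap _ _ (Ideal.Quotient.mk (Ideal.span {f}) g)) =
        AdjoinRoot.mk _ ((e g).map (algebraMap R F)) := by
  have hker := ker_adjoinRoot_mk_map_comp_ringEquiv F e hfp hp
  have hinj := (Ideal.injective_lift_iff (fun g hg => RingHom.mem_ker.mp (hker.ge hg))).mpr hker
  exact ⟨IsFractionRing.lift hinj, fun g => IsFractionRing.lift_algebraMap hinj _⟩

end Gauss

noncomputable def finTwoAlgEquiv (K : Type*) [CommSemiring K] :
    MvPolynomial (Fin 2) K ≃ₐ[K] K[X][X] :=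
  (MvPolynomial.finSuccEquiv K 1).trans
    (mapAlgEquiv ((MvPolynomial.finSuccEquiv K 0).trans
      (mapAlgEquiv (MvPolynomial.isEmptyAlgEquiv K (Fin 0)))))

section FinTwo

variable {K : Type*} [CommSemiring K]

@[simp]
theorem finTwoAlgEquiv_X_zero : finTwoAlgEquiv K (MvPolynomial.X 0) = X := by
  simp [finTwoAlgEquiv, coe_mapAlgEquiv, MvPolynomial.finSuccEquiv_X_zero]

@[simp]
theorem finTwoAlgEquiv_X_one : finTwoAlgEquiv K (MvPolynomial.X 1) = C X := by
  rw [show (1 : Fin 2) = Fin.succ 0 from rfl, finTwoAlgEquiv, AlgEquiv.trans_apply,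
    MvPolynomial.finSuccEquiv_X_succ]
  simp [coe_mapAlgEquiv, MvPolynomial.finSuccEquiv_X_zero]

@[simp]
theorem finTwoAlgEquiv_C (k : K) : finTwoAlgEquiv K (MvPolynomial.C k) = C (C k) := by
  rw [← MvPolynomial.algebraMap_eq, AlgEquiv.commutes]
  simp [Polynomial.algebraMap_apply]

end FinTwo

section Curve

variable {K : Type*} [Field K] (a t : K) (m : ℕ)

noncomputable def curvePoly : K[X][X] := C (C (t ^ 2) * X ^ m - C (a * t)) * X ^ m + C (C (a ^ 2))

theorem finTwoAlgEquiv_curve :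
    finTwoAlgEquiv K (MvPolynomial.C a ^ 2 + MvPolynomial.C t ^ 2 * MvPolynomial.X 0 ^ m *
      MvPolynomial.X 1 ^ m - MvPolynomial.C a * MvPolynomial.C t * MvPolynomial.X 0 ^ m) =
      curvePoly a t m := by
  simp only [map_add, map_sub, map_mul, map_pow, finTwoAlgEquiv_C, finTwoAlgEquiv_X_zero,
    finTwoAlgEquiv_X_one, curvePoly]
  ring

theorem finTwoAlgEquiv_residue :
    finTwoAlgEquiv K ((MvPolynomial.C a - MvPolynomial.C t * MvPolynomial.X 0 ^ m) *
      (MvPolynomial.C a - MvPolynomial.C t * MvPolynomial.X 1 ^ m)) =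
      curvePoly a t m - C (C (a * t) * X ^ m) := by
  simp only [map_sub, map_mul, map_pow, finTwoAlgEquiv_C, finTwoAlgEquiv_X_zero,
    finTwoAlgEquiv_X_one, curvePoly]
  ring

variable {a t}

theorem curvePoly_eq (ht : t ≠ 0) :
    curvePoly a t m = C (C (t ^ 2) * (X ^ m - C (a / t))) * X ^ m + C (C (a ^ 2)) := by
  rw [curvePoly, mul_sub (C (t ^ 2)), ← C_mul]
  congr 5
  field_simp

theorem curvePoly_isPrimitive (ha : a ≠ 0) (hm : m ≠ 0) : (curvePoly a t m).IsPrimitive := by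
  intro r hr
  have hcoeff : (curvePoly a t m).coeff 0 = C (a ^ 2) := by
    rw [curvePoly, coeff_add, coeff_C_mul_X_pow, if_neg hm.symm, coeff_C_zero, zero_add]
  exact isUnit_of_dvd_unit (hcoeff ▸ (C_dvd_iff_dvd_coeff _ _).mp hr 0)
    (isUnit_C.mpr (pow_ne_zero 2 ha).isUnit)

theorem natDegree_map_curvePoly (ht : t ≠ 0) (hm : m ≠ 0) :
    ((curvePoly a t m).map (algebraMap K[X] (RatFunc K))).natDegree = m := by
  rw [natDegree_map_eq_of_injective (IsFractionRing.injective _ _), curvePoly_eq m ht,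
    natDegree_C_mul_X_pow_add_C]
  exact mul_ne_zero (C_ne_zero.mpr (pow_ne_zero 2 ht))
    (X_pow_sub_C_ne_zero (Nat.pos_of_ne_zero hm) _)

theorem irreducible_map_curvePoly [IsAlgClosed K] (p : ℕ) [CharP K p] (hpm : ¬ p ∣ m)
    (hodd : Odd m) (ha : a ≠ 0) (ht : t ≠ 0) :
    Irreducible ((curvePoly a t m).map (algebraMap K[X] (RatFunc K))) := by
  set ι := algebraMap K[X] (RatFunc K)
  set s : K[X] := X ^ m - C (a / t)
  have hk : -t ^ 2 / a ^ 2 ≠ 0 := by simp [ha, ht]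
  have hquot : -ι (C (t ^ 2) * s) / ι (C (a ^ 2)) = ι (C (-t ^ 2 / a ^ 2) * s) := by
    rw [div_eq_iff (by simp [ι, ha]), ← map_neg, ← map_mul, mul_right_comm, ← C_mul,
      div_mul_cancel₀ _ (pow_ne_zero 2 ha), C_neg, neg_mul]
  have hsep : (C (-t ^ 2 / a ^ 2) * s).Separable :=
    (separable_X_pow_sub_C' p m _ hpm (div_ne_zero ha ht)).unit_mul (isUnit_C.mpr hk.isUnit)
  have hdeg : (C (-t ^ 2 / a ^ 2) * s).degree ≠ 0 := by
    rw [degree_C_mul hk, degree_X_pow_sub_C hodd.pos]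
    exact_mod_cast hodd.pos.ne'
  obtain ⟨z, hz⟩ := exists_rootMultiplicity_eq_one hsep hdeg
  rw [curvePoly_eq m ht, Polynomial.map_add, Polynomial.map_mul, Polynomial.map_pow, map_X,
    map_C, map_C]
  refine irreducible_C_mul_X_pow_add_C ?_ hodd fun q hq _ b => hquot ▸ ?_
  · rw [map_ne_zero_iff ι (IsFractionRing.injective _ _)]
    exact mul_ne_zero (C_ne_zero.mpr (pow_ne_zero 2 ht)) (X_pow_sub_C_ne_zero hodd.pos _)
  · exact not_pow_eq_algebraMap_of_not_dvd_rootMultiplicity (by rw [hz]; exact hq.not_dvd_one) b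

theorem not_isSquare_mk_curvePoly_sub
    [Fact (Irreducible ((curvePoly a t m).map (algebraMap K[X] (RatFunc K))))]
    (hodd : Odd m) (ha : a ≠ 0) (ht : t ≠ 0) :
    ¬ IsSquare (AdjoinRoot.mk ((curvePoly a t m).map (algebraMap K[X] (RatFunc K)))
      ((curvePoly a t m - C (C (a * t) * X ^ m)).map (algebraMap K[X] (RatFunc K)))) := by
  set P := (curvePoly a t m).map (algebraMap K[X] (RatFunc K))
  have hval : AdjoinRoot.mk P ((curvePoly a t m - C (C (a * t) * X ^ m)).map
      (algebraMap K[X] (RatFunc K))) =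
      algebraMap (RatFunc K) (AdjoinRoot P) (algebraMap K[X] (RatFunc K) (C (-(a * t)) * X ^ m)) := by
    rw [Polynomial.map_sub, map_sub, AdjoinRoot.mk_self, zero_sub, map_C, AdjoinRoot.mk_C, C_neg,
      neg_mul, map_neg, map_neg]
    rfl
  have hP : P ≠ 0 := (Fact.out : Irreducible P).ne_zero
  have : Module.Finite (RatFunc K) (AdjoinRoot P) := (AdjoinRoot.powerBasis hP).finite
  have hfinrank : Module.finrank (RatFunc K) (AdjoinRoot P) = m := by
    rw [(AdjoinRoot.powerBasis hP).finrank, AdjoinRoot.powerBasis_dim,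
      natDegree_map_curvePoly m ht hodd.pos.ne']
  rw [hval]
  intro hsq
  exact not_isSquare_algebraMap_C_mul_X_pow (neg_ne_zero.mpr (mul_ne_zero ha ht)) hodd
    (isSquare_of_isSquare_algebraMap_of_odd_finrank (L := AdjoinRoot P) (hfinrank ▸ hodd) hsq)

end Curve

end

open MvPolynomial

/-- The residue class of `g` in the total fraction ring of `K[X,Y]/(f)`
(the function field of the curve `f = 0` when `f` is irreducible). -/
noncomputable def residueInFunctionField {K : Type*} [Field K]
    (f g : MvPolynomial (Fin 2) K) :
    FractionRing (MvPolynomial (Fin 2) K ⧸ Ideal.span {f}) :=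
  algebraMap (MvPolynomial (Fin 2) K ⧸ Ideal.span {f})
    (FractionRing (MvPolynomial (Fin 2) K ⧸ Ideal.span {f}))
    (Ideal.Quotient.mk (Ideal.span {f}) g)

theorem statement_18_general (K : Type) [Field K] [IsAlgClosed K]
    (p : ℕ) [CharP K p]
    (m : ℕ) (hodd : Odd m) (hpm : ¬ (p ∣ m))
    (a t : K) (ha : a ^ 3 = -1) (ht : t ≠ 0) :
    Irreducible (C a ^ 2 + C t ^ 2 * X 0 ^ m * X 1 ^ m - C a * C t * X 0 ^ m :
        MvPolynomial (Fin 2) K) ∧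
    ¬ IsSquare (residueInFunctionField
      (C a ^ 2 + C t ^ 2 * X 0 ^ m * X 1 ^ m - C a * C t * X 0 ^ m)
      ((C a - C t * X 0 ^ m) * (C a - C t * X 1 ^ m))) := by
  classical
  have ha0 : a ≠ 0 := by
    rintro rfl
    norm_num at ha
  have hprim := curvePoly_isPrimitive (t := t) m ha0 hodd.pos.ne'
  have : Fact (Irreducible ((curvePoly a t m).map (algebraMap (Polynomial K) (RatFunc K)))) :=
    ⟨irreducible_map_curvePoly m p hpm hodd ha0 ht⟩
  have hirr : Irreducible (C a ^ 2 + C t ^ 2 * X 0 ^ m * X 1 ^ m - C a * C t * X 0 ^ m :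
      MvPolynomial (Fin 2) K) := by
    rw [← MulEquiv.irreducible_iff (finTwoAlgEquiv K), finTwoAlgEquiv_curve,
      hprim.irreducible_iff_irreducible_map_fraction_map (K := RatFunc K)]
    exact Fact.out
  have := (Ideal.span_singleton_prime hirr.ne_zero).mpr hirr.prime
  obtain ⟨Φ, hΦ⟩ := exists_fractionRing_quotient_hom_adjoinRoot (RatFunc K)
    (finTwoAlgEquiv K).toRingEquiv (finTwoAlgEquiv_curve a t m) hprim
  refine ⟨hirr, fun hsq => not_isSquare_mk_curvePoly_sub m hodd ha0 ht ?_⟩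
  rw [← finTwoAlgEquiv_residue]
  exact hΦ _ ▸ hsq.map Φ

theorem statement_18 (K : Type) [Field K] [IsAlgClosed K]
    (p : ℕ) [CharP K p] (hp : p.Prime) (hp3 : 3 < p)
    (m : ℕ) (hm : 0 < m) (hodd : Odd m) (hpm : ¬ (p ∣ m))
    (a t : K) (ha : a ^ 3 = -1) (ht : t ≠ 0) :
    Irreducible (C a ^ 2 + C t ^ 2 * X 0 ^ m * X 1 ^ m - C a * C t * X 0 ^ m :
        MvPolynomial (Fin 2) K) ∧
    ¬ IsSquare (residueInFunctionField
      (C a ^ 2 + C t ^ 2 * X 0 ^ m * X 1 ^ m - C a * C t * X 0 ^ m)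
      ((C a - C t * X 0 ^ m) * (C a - C t * X 1 ^ m))) :=
  statement_18_general K p m hodd hpm a t ha ht
end
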